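/- arXiv:2501.09850 — 2 statements merged into one kernel-verified Lean document; each statement's English description precedes it below -/
import Mathlib

section
/- Let p be a prime, let r ≥ 1, and let k be a field of characteristic p. Let N be the r×r lower shift matrix over k, i.e. N(i,j) = 1 if i = j+1 and N(i,j) = 0 otherwise. Then there exists a strictly lower triangular r×r matrix A over k (meaning A(i,j) = 0 whenever i ≤ j) with A^p - A = N. (This is the matrix construction in the proof that the stack ℋ^o of very good regular log-connections is non-empty for GL_r: it produces a local log-connection with nilpotent residue whose p-curvature is the regular nilpotent element N.) -/
/-!
Put `a := -(N + N ^ p + ⋯ + N ^ p ^ (r - 1))`. Frobenius is additive on polynomials in `N`, so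
`a ^ p` is the same series shifted by one term and `a ^ p - a` telescopes to `N - N ^ p ^ r`,
which is `N` because `N ^ r = 0`. Every power `N ^ t` with `t ≥ 1` is strictly lower
triangular, hence so is `a`.
-/

open Finset Polynomial

theorem artinSchreier_neg_sum_pow_char_pow {R : Type*} [CommRing R] (p : ℕ) [Fact p.Prime]
    [CharP R p] (x : R) (n : ℕ) :
    (-∑ m ∈ range n, x ^ p ^ m) ^ p - -∑ m ∈ range n, x ^ p ^ m = x - x ^ p ^ n := by
  have frobenius_shift : (∑ m ∈ range n, x ^ p ^ m) ^ p = ∑ m ∈ range n, x ^ p ^ (m + 1) := by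
    simp only [sum_pow_char, ← pow_mul, pow_succ]
  rw [neg_pow, neg_one_pow_char, neg_one_mul, frobenius_shift, neg_sub_neg, ← sum_sub_distrib,
    sum_range_sub' (fun m => x ^ p ^ m), pow_zero, pow_one]

namespace Matrix

theorem pow_apply_eq_zero_of_lt_add {R : Type*} [Semiring R] {r : ℕ}
    {M : Matrix (Fin r) (Fin r) R} (hM : ∀ i j : Fin r, (i : ℕ) ≤ (j : ℕ) → M i j = 0) (t : ℕ)
    {i j : Fin r} (hij : (i : ℕ) < (j : ℕ) + t) : (M ^ t) i j = 0 := by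
  induction t generalizing j with
  | zero => exact one_apply_ne (fun h => by subst h; omega)
  | succ t ih =>
    rw [pow_succ, mul_apply]
    refine sum_eq_zero fun l _ => ?_
    rcases le_or_gt (l : ℕ) j with hlj | hjl
    · rw [hM l j hlj, mul_zero]
    · rw [ih (by omega), zero_mul]

end Matrix

theorem exists_strictly_lower_triangular_artinSchreier_eq_lowerShift_general
    (p : ℕ) (hp : p.Prime) (r : ℕ)
    (k : Type*) [Field k] [CharP k p] :
    ∃ A : Matrix (Fin r) (Fin r) k,
      (∀ i j : Fin r, (i : ℕ) ≤ (j : ℕ) → A i j = 0) ∧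
      A ^ p - A =
        Matrix.of (fun i j : Fin r => if (i : ℕ) = (j : ℕ) + 1 then (1 : k) else 0) := by
  have : Fact p.Prime := ⟨hp⟩
  set N : Matrix (Fin r) (Fin r) k :=
    Matrix.of (fun i j : Fin r => if (i : ℕ) = (j : ℕ) + 1 then (1 : k) else 0)
  have hN : ∀ i j : Fin r, (i : ℕ) ≤ (j : ℕ) → N i j = 0 := fun i j hij =>
    if_neg (by omega)
  have hNpow : N ^ p ^ r = 0 := by
    ext i j
    exact N.pow_apply_eq_zero_of_lt_add hN _ (by have := Nat.lt_pow_self hp.one_lt (n := r); omega)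
  have h_eval : aeval N (-∑ m ∈ range r, (X : k[X]) ^ p ^ m) = -∑ m ∈ range r, N ^ p ^ m := by
    simp only [map_neg, map_sum, map_pow, aeval_X]
  refine ⟨-∑ m ∈ range r, N ^ p ^ m, fun i j hij => ?_, ?_⟩
  · simp only [Matrix.neg_apply, Matrix.sum_apply, neg_eq_zero]
    exact sum_eq_zero fun m _ =>
      N.pow_apply_eq_zero_of_lt_add hN _ (by have := Nat.one_le_pow m p hp.pos; omega)
  · have := congrArg (aeval N) (artinSchreier_neg_sum_pow_char_pow p (X : k[X]) r)
    rwa [map_sub, map_pow, h_eval, map_sub, map_pow, aeval_X, hNpow, sub_zero] at this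

/-- Over a field of characteristic `p`, the lower shift (regular nilpotent) matrix `N`
is in the image of the Artin–Schreier map `A ↦ A^p - A` restricted to strictly lower
triangular matrices. -/
theorem exists_strictly_lower_triangular_artinSchreier_eq_lowerShift
    (p : ℕ) (hp : p.Prime) (r : ℕ) (hr : 1 ≤ r)
    (k : Type*) [Field k] [CharP k p] :
    ∃ A : Matrix (Fin r) (Fin r) k,
      (∀ i j : Fin r, (i : ℕ) ≤ (j : ℕ) → A i j = 0) ∧
      A ^ p - A =
        Matrix.of (fun i j : Fin r => if (i : ℕ) = (j : ℕ) + 1 then (1 : k) else 0) :=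
  exists_strictly_lower_triangular_artinSchreier_eq_lowerShift_general p hp r k
end

section
/- Let p be a prime, let k be an algebraically closed field of characteristic p, and let r ≥ 1. The set of multisets b over k satisfying Multiset.map (x ↦ x^p - x) b = (the multiset consisting of r copies of 0) has exactly binomial(p + r - 1, r) elements; moreover, for r ≥ 2 this number is strictly smaller than p^r. (This computes the set-theoretic fiber of the Artin–Schreier morphism AS_𝔠 over the point {0, 0, ..., 0} of 𝔠 = 𝔤𝔩_r // GL_r and shows, by comparison with the general fiber of cardinality p^r, that AS_𝔠 is not étale for GL_{r≥2}.) -/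
/-! The roots of `x ^ p - x` in a field of characteristic `p` are exactly the `p` elements of
the prime field, so the fiber over `r • {0}` consists of the `r`-element multisets drawn from
`𝔽_p`, of which there are `(p + r - 1).choose r`. Sending an `r`-tuple to its multiset is onto,
but for `r ≥ 2` it is not injective (swap two distinct entries), whence the strict bound `p ^ r`.
-/

namespace Sym

variable {α : Type*}

theorem ofVector_surjective (n : ℕ) :
    Function.Surjective (ofVector : List.Vector α n → Sym α n) := by
  rintro ⟨m, hm⟩
  induction m using Quotient.inductionOn with
  | h l => exact ⟨⟨l, hm⟩, rfl⟩

theorem not_injective_ofVector [Nontrivial α] {n : ℕ} (hn : 2 ≤ n) :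
    ¬Function.Injective (ofVector : List.Vector α n → Sym α n) := by
  obtain ⟨m, rfl⟩ := Nat.exists_eq_add_of_le' hn
  obtain ⟨a, b, hab⟩ := exists_pair_ne α
  intro h
  have hswap : ofVector (a ::ᵥ b ::ᵥ List.Vector.replicate m a)
      = ofVector (b ::ᵥ a ::ᵥ List.Vector.replicate m a) := by
    simp only [ofVector_cons, cons_swap]
  exact hab (congrArg List.Vector.head (h hswap))

theorem card_lt_card_pow [Fintype α] [DecidableEq α] [Nontrivial α] {n : ℕ} (hn : 2 ≤ n) :
    Fintype.card (Sym α n) < Fintype.card α ^ n := by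
  rw [← card_vector]
  exact Fintype.card_lt_of_surjective_not_injective _ (ofVector_surjective n)
    (not_injective_ofVector hn)

end Sym

namespace Multiset

variable {α β : Type*}

theorem setOf_map_eq_replicate_eq_range (f : α → β) (c : β) (r : ℕ) :
    {b : Multiset α | b.map f = replicate r c}
      = Set.range fun s : Sym (f ⁻¹' {c}) r => s.1.map Subtype.val := by
  ext b
  simp only [Set.mem_ofPred_eq, Set.mem_range, eq_replicate, card_map, forall_mem_map_iff]
  constructor
  · rintro ⟨hcard, hfiber⟩
    lift b to Multiset (f ⁻¹' {c}) using hfiber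
    exact ⟨⟨b, by simpa using hcard⟩, rfl⟩
  · rintro ⟨s, rfl⟩
    exact ⟨by simp, forall_mem_map_iff.mpr fun x _ => x.2⟩

theorem ncard_setOf_map_eq_replicate (f : α → β) (c : β) (r : ℕ) :
    {b : Multiset α | b.map f = replicate r c}.ncard
      = (Nat.card (f ⁻¹' {c}) + r - 1).choose r := by
  rw [setOf_map_eq_replicate_eq_range, Set.ncard_range_of_injective, Sym.natCard_sym_eq_choose]
  intro s t hst
  exact Subtype.ext (map_injective Subtype.val_injective hst)

end Multiset

theorem natCard_preimage_pow_char_sub_self_zero (k : Type*) [Field k] (p : ℕ) [Fact p.Prime]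
    [CharP k p] : Nat.card ((fun x : k => x ^ p - x) ⁻¹' {0}) = p := by
  have hfiber : (fun x : k => x ^ p - x) ⁻¹' {0} = ((⊥ : Subfield k) : Set k) := by
    ext x
    simp [sub_eq_zero, Subfield.mem_bot_iff_pow_eq_self k p]
  rw [hfiber]
  exact Subfield.card_bot k p

theorem artinSchreier_multiset_nilpotent_fiber_card_general
    (p : ℕ) (hp : p.Prime) (k : Type*) [Field k] [CharP k p]
    (r : ℕ) :
    {b : Multiset k |
        Multiset.map (fun x => x ^ p - x) b = Multiset.replicate r (0 : k)}.ncard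
      = (p + r - 1).choose r ∧
    (2 ≤ r → (p + r - 1).choose r < p ^ r) := by
  have := Fact.mk hp
  refine ⟨?_, fun hr => ?_⟩
  · rw [Multiset.ncard_setOf_map_eq_replicate, natCard_preimage_pow_char_sub_self_zero]
  · have := Fin.nontrivial_iff_two_le.mpr hp.two_le
    simpa [Sym.card_sym_eq_choose] using Sym.card_lt_card_pow (α := Fin p) hr

/-- The fiber of the (multiset) Artin–Schreier morphism over `{0, 0, ..., 0}`
(`r` copies of `0`) has exactly `(p + r - 1).choose r` elements, which for `r ≥ 2` is
strictly smaller than `p^r`. -/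
theorem artinSchreier_multiset_nilpotent_fiber_card
    (p : ℕ) (hp : p.Prime) (k : Type*) [Field k] [IsAlgClosed k] [CharP k p]
    (r : ℕ) (hr : 1 ≤ r) :
    {b : Multiset k |
        Multiset.map (fun x => x ^ p - x) b = Multiset.replicate r (0 : k)}.ncard
      = (p + r - 1).choose r ∧
    (2 ≤ r → (p + r - 1).choose r < p ^ r) :=
  artinSchreier_multiset_nilpotent_fiber_card_general p hp k r
end
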